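/- Fix a > 2 and λ > 0, and define the SCAD penalty ρ_λ : ℝ → ℝ by ρ_λ(t) = λ|t| for |t| ≤ λ, ρ_λ(t) = −(t² − 2aλ|t| + λ²)/(2(a − 1)) for λ < |t| ≤ aλ, and ρ_λ(t) = (a + 1)λ²/2 for |t| > aλ. Then ρ_λ satisfies Assumption 1 with L = 1 and μ = 1/(a − 1); that is: ρ_λ(0) = 0 and ρ_λ(−t) = ρ_λ(t) for all t; ρ_λ is nondecreasing on [0, ∞); t ↦ ρ_λ(t)/t is nonincreasing on (0, ∞); ρ_λ is differentiable at every t ≠ 0 with lim_{t→0⁺} ρ_λ'(t) = λ; and t ↦ ρ_λ(t) + t²/(2(a − 1)) is convex on ℝ. -/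

import Mathlib

/-- The SCAD penalty with parameters `a > 2` and `λ > 0`. -/
noncomputable def scad (a lam t : ℝ) : ℝ :=
  if |t| ≤ lam then lam * |t|
  else if |t| ≤ a * lam then -(t ^ 2 - 2 * a * lam * |t| + lam ^ 2) / (2 * (a - 1))
  else (a + 1) * lam ^ 2 / 2

/-- Assumption 1 on the regularizer `ρ_λ` with parameters `λ, L, μ`. -/
structure Assumption1 (ρ : ℝ → ℝ) (lam L mu : ℝ) : Prop where
  zero : ρ 0 = 0
  even : ∀ t : ℝ, ρ (-t) = ρ t
  mono : ∀ s t : ℝ, 0 ≤ s → s ≤ t → ρ s ≤ ρ t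
  slope : ∀ s t : ℝ, 0 < s → s ≤ t → ρ t / t ≤ ρ s / s
  diff : ∀ t : ℝ, t ≠ 0 → DifferentiableAt ℝ ρ t
  deriv_lim : Filter.Tendsto (deriv ρ) (nhdsWithin 0 (Set.Ioi 0)) (nhds (lam * L))
  conv : ConvexOn ℝ Set.univ (fun t => ρ t + (mu / 2) * t ^ 2)

/-!
With `u = |t|`, `2 (a - 1) ρ_λ(t) = 2aλu - λ² - u² + (λ - u)₊² + (u - aλ)₊²`: the clipped squares
vanish on `[λ, aλ]` and turn the middle quadratic into the linear and the constant piece outside it.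
This profile is `C¹` on all of `ℝ`, with derivative `2((aλ - u)₊ - (λ - u)₊)`, which is
nonnegative, antitone and equal to `2(a - 1)λ` at `0`. So the profile is nondecreasing, and concave
with value `0` at `0`, which gives the slope condition. Adding `u²` makes the derivative monotone,
and a convex function that is nondecreasing on `[0, ∞)` stays convex when composed with `|t|`.
-/

open Set Filter Topology

lemma hasDerivAt_max_zero_sq (x : ℝ) :
    HasDerivAt (fun y : ℝ => max y 0 ^ 2) (2 * max x 0) x := by
  rcases lt_trichotomy x 0 with hx | rfl | hx
  · have hzero : (fun y : ℝ => max y 0 ^ 2) =ᶠ[𝓝 x] fun _ => 0 := by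
      filter_upwards [Iio_mem_nhds hx] with y (hy : y < 0)
      simp [max_eq_right hy.le]
    simpa [max_eq_right hx.le] using (hasDerivAt_const x (0 : ℝ)).congr_of_eventuallyEq hzero
  · have hleft : HasDerivWithinAt (fun y : ℝ => max y 0 ^ 2) 0 (Iic 0) 0 :=
      (hasDerivWithinAt_const 0 _ 0).congr (fun y (hy : y ≤ 0) => by simp [max_eq_right hy])
        (by simp)
    have hright : HasDerivWithinAt (fun y : ℝ => max y 0 ^ 2) 0 (Ici 0) 0 :=
      ((hasDerivAt_pow 2 (0 : ℝ)).hasDerivWithinAt.congr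
        (fun y (hy : 0 ≤ y) => by simp [max_eq_left hy]) (by simp)).congr_deriv (by simp)
    simpa [Iic_union_Ici] using hleft.union hright
  · have hsq : (fun y : ℝ => max y 0 ^ 2) =ᶠ[𝓝 x] fun y => y ^ 2 := by
      filter_upwards [Ioi_mem_nhds hx] with y (hy : 0 < y)
      simp [max_eq_left hy.le]
    simpa [max_eq_left hx.le] using (hasDerivAt_pow 2 x).congr_of_eventuallyEq hsq

lemma ConvexOn.comp_abs {g : ℝ → ℝ} (hg : ConvexOn ℝ univ g) (hmono : MonotoneOn g (Ici 0)) :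
    ConvexOn ℝ univ fun t => g |t| := by
  have himage : (|·|) '' (univ : Set ℝ) = Ici 0 :=
    Set.ext fun x => ⟨by rintro ⟨y, -, rfl⟩; exact abs_nonneg y,
      fun hx => ⟨x, trivial, abs_of_nonneg hx⟩⟩
  refine ConvexOn.comp ?_ ((convexOn_id convex_univ).sup (concaveOn_id convex_univ).neg) ?_
  · rw [himage]; exact hg.subset (subset_univ _) (convex_Ici 0)
  · rwa [himage]

lemma ConcaveOn.antitoneOn_div_Ioi {g : ℝ → ℝ} (hg : ConcaveOn ℝ (Ici 0) g) (h0 : g 0 = 0) :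
    AntitoneOn (fun t => g t / t) (Ioi 0) := by
  intro s (hs : 0 < s) t (ht : 0 < t) hst
  simpa [slope_def_field, h0] using
    hg.antitoneOn_slope_gt self_mem_Ici ⟨hs.le, hs⟩ ⟨ht.le, ht⟩ hst

noncomputable def scadProfile (a lam u : ℝ) : ℝ :=
  2 * a * lam * u - lam ^ 2 - u ^ 2 + max (lam - u) 0 ^ 2 + max (u - a * lam) 0 ^ 2

noncomputable def scadProfileDeriv (a lam u : ℝ) : ℝ :=
  2 * (max (a * lam - u) 0 - max (lam - u) 0)

variable {a lam : ℝ}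

lemma hasDerivAt_scadProfile (u : ℝ) :
    HasDerivAt (scadProfile a lam) (scadProfileDeriv a lam u) u := by
  have hlin := (((hasDerivAt_id u).const_mul (2 * a * lam)).sub_const (lam ^ 2)).sub
    (hasDerivAt_pow 2 u)
  have hleft := (hasDerivAt_max_zero_sq (lam - u)).comp u ((hasDerivAt_id u).const_sub lam)
  have hright :=
    (hasDerivAt_max_zero_sq (u - a * lam)).comp u ((hasDerivAt_id u).sub_const (a * lam))
  refine ((hlin.add hleft).add hright).congr_deriv ?_
  simp only [scadProfileDeriv]
  rcases le_total u (a * lam) with h | h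
  · rw [max_eq_left (sub_nonneg.2 h), max_eq_right (sub_nonpos.2 h)]; ring
  · rw [max_eq_right (sub_nonpos.2 h), max_eq_left (sub_nonneg.2 h)]; ring

lemma continuous_scadProfileDeriv : Continuous (scadProfileDeriv a lam) := by
  unfold scadProfileDeriv; fun_prop

lemma scadProfileDeriv_nonneg (h : lam ≤ a * lam) (u : ℝ) : 0 ≤ scadProfileDeriv a lam u := by
  have := max_le_max_right 0 (sub_le_sub_right h u)
  unfold scadProfileDeriv; linarith

lemma antitone_scadProfileDeriv (h : lam ≤ a * lam) : Antitone (scadProfileDeriv a lam) := by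
  intro u v huv
  simp only [scadProfileDeriv, max_def]
  split_ifs <;> linarith

lemma monotone_scadProfileDeriv_add : Monotone fun u => scadProfileDeriv a lam u + 2 * u := by
  intro u v huv
  simp only [scadProfileDeriv, max_def]
  split_ifs <;> linarith

lemma scadProfile_zero (hlam : 0 ≤ lam) (h : lam ≤ a * lam) : scadProfile a lam 0 = 0 := by
  simp [scadProfile, max_eq_left hlam, hlam.trans h]

lemma monotone_scadProfile (h : lam ≤ a * lam) : Monotone (scadProfile a lam) :=
  monotone_of_hasDerivAt_nonneg hasDerivAt_scadProfile (scadProfileDeriv_nonneg h)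

lemma concaveOn_scadProfile (h : lam ≤ a * lam) : ConcaveOn ℝ univ (scadProfile a lam) := by
  have hderiv : deriv (scadProfile a lam) = scadProfileDeriv a lam :=
    funext fun u => (hasDerivAt_scadProfile u).deriv
  exact Antitone.concaveOn_univ_of_deriv (fun u => (hasDerivAt_scadProfile u).differentiableAt)
    (hderiv ▸ antitone_scadProfileDeriv h)

lemma convexOn_scadProfile_add_sq : ConvexOn ℝ univ fun u => scadProfile a lam u + u ^ 2 := by
  have hderiv (u : ℝ) : HasDerivAt (fun u => scadProfile a lam u + u ^ 2)
      (scadProfileDeriv a lam u + 2 * u) u :=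
    ((hasDerivAt_scadProfile u).add (hasDerivAt_pow 2 u)).congr_deriv (by norm_num)
  exact Monotone.convexOn_univ_of_deriv (fun u => (hderiv u).differentiableAt)
    ((funext fun u => (hderiv u).deriv) ▸ monotone_scadProfileDeriv_add)

lemma scad_eq_scadProfile (ha : 1 < a) (hlam : 0 ≤ lam) (t : ℝ) :
    scad a lam t = scadProfile a lam |t| / (2 * (a - 1)) := by
  have hla : lam ≤ a * lam := by nlinarith
  have ha1 : a - 1 ≠ 0 := by linarith
  have hu := abs_nonneg t
  rw [eq_div_iff (by linarith), scad, scadProfile, ← sq_abs t]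
  split_ifs with h₁ h₂
  · rw [max_eq_left (by linarith), max_eq_right (by linarith)]; ring
  · rw [max_eq_right (by linarith), max_eq_right (by linarith)]; field_simp; ring
  · rw [max_eq_right (by linarith), max_eq_left (by linarith)]; ring

lemma monotoneOn_scad (ha : 1 < a) (hlam : 0 ≤ lam) : MonotoneOn (scad a lam) (Ici 0) := by
  intro s (hs : 0 ≤ s) t (ht : 0 ≤ t) hst
  rw [scad_eq_scadProfile ha hlam, scad_eq_scadProfile ha hlam, abs_of_nonneg hs,
    abs_of_nonneg ht]
  exact div_le_div_of_nonneg_right (monotone_scadProfile (by nlinarith) hst) (by linarith)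

lemma antitoneOn_scad_div (ha : 1 < a) (hlam : 0 ≤ lam) :
    AntitoneOn (fun t => scad a lam t / t) (Ioi 0) := by
  have hla : lam ≤ a * lam := by nlinarith
  have hslope := ((concaveOn_scadProfile hla).subset (subset_univ _)
    (convex_Ici 0)).antitoneOn_div_Ioi (scadProfile_zero hlam hla)
  intro s (hs : 0 < s) t (ht : 0 < t) hst
  simp only [scad_eq_scadProfile ha hlam, abs_of_pos hs, abs_of_pos ht]
  rw [div_right_comm, div_right_comm (scadProfile a lam s)]
  exact div_le_div_of_nonneg_right (hslope hs ht hst) (by linarith)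

lemma hasDerivAt_scad (ha : 1 < a) (hlam : 0 ≤ lam) {t : ℝ} (ht : t ≠ 0) :
    HasDerivAt (scad a lam) (scadProfileDeriv a lam |t| * SignType.sign t / (2 * (a - 1))) t := by
  rw [funext (scad_eq_scadProfile ha hlam)]
  exact ((hasDerivAt_scadProfile |t|).comp t (hasDerivAt_abs ht)).div_const _

lemma tendsto_deriv_scad (ha : 1 < a) (hlam : 0 ≤ lam) :
    Tendsto (deriv (scad a lam)) (𝓝[>] 0) (𝓝 lam) := by
  have hderiv :
      (fun t => scadProfileDeriv a lam t / (2 * (a - 1))) =ᶠ[𝓝[>] 0] deriv (scad a lam) := by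
    filter_upwards [self_mem_nhdsWithin] with t (ht : 0 < t)
    simpa [abs_of_pos ht, ht] using (hasDerivAt_scad ha hlam ht.ne').deriv.symm
  have hval : scadProfileDeriv a lam 0 / (2 * (a - 1)) = lam := by
    have ha1 : a - 1 ≠ 0 := by linarith
    rw [scadProfileDeriv, sub_zero, sub_zero, max_eq_left hlam, max_eq_left (by nlinarith)]
    field_simp
  have hlim := (((continuous_scadProfileDeriv (a := a) (lam := lam)).div_const
    (2 * (a - 1))).tendsto 0).mono_left (nhdsWithin_le_nhds (s := Ioi 0))
  rw [hval] at hlim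
  exact hlim.congr' hderiv

lemma convexOn_scad_add_sq (ha : 1 < a) (hlam : 0 ≤ lam) :
    ConvexOn ℝ univ fun t => scad a lam t + (1 / (a - 1) / 2) * t ^ 2 := by
  have hmono : MonotoneOn (fun u => scadProfile a lam u + u ^ 2) (Ici 0) :=
    ((monotone_scadProfile (by nlinarith)).monotoneOn _).add
      fun s (hs : 0 ≤ s) _ _ hst => pow_le_pow_left₀ hs hst 2
  have heq : (fun t => scad a lam t + (1 / (a - 1) / 2) * t ^ 2) =
      (2 * (a - 1))⁻¹ • fun t => scadProfile a lam |t| + |t| ^ 2 := by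
    have ha1 : a - 1 ≠ 0 := by linarith
    funext t
    simp only [scad_eq_scadProfile ha hlam, sq_abs, Pi.smul_apply, smul_eq_mul]
    field_simp
  rw [heq]
  exact (convexOn_scadProfile_add_sq.comp_abs hmono).smul (inv_nonneg.2 (by linarith))

theorem scad_satisfies_assumption1 (a lam : ℝ) (ha : 2 < a) (hlam : 0 < lam) :
    Assumption1 (scad a lam) lam 1 (1 / (a - 1)) := by
  have ha₁ : 1 < a := by linarith
  exact
    { zero := by simp [scad, hlam.le]
      even := fun t => by simp only [scad, abs_neg, neg_sq]
      mono := fun s t hs hst => monotoneOn_scad ha₁ hlam.le hs (hs.trans hst) hst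
      slope := fun s t hs hst => antitoneOn_scad_div ha₁ hlam.le hs (hs.trans_le hst) hst
      diff := fun t ht => (hasDerivAt_scad ha₁ hlam.le ht).differentiableAt
      deriv_lim := by simpa using tendsto_deriv_scad ha₁ hlam.le
      conv := convexOn_scad_add_sq ha₁ hlam.le }
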